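/- Let G and H be graphs with |V(G)| = |V(H)|. Define an instance of Seat Arrangement with agents P = V(H), seat graph G, and binary symmetric preferences f_p(q) = f_q(p) = 1 if {p,q} ∈ E(H) and 0 otherwise. Then there is a bijection g : V(G) → V(H) such that {g(u), g(v)} ∈ E(H) for every {u,v} ∈ E(G) if and only if there is an arrangement π with social welfare sw(π) = 2|E(G)|. -/

import Mathlib

open scoped Classical

noncomputable section

namespace SeatArrangement

variable {P V : Type*}

/-- The utility of agent `p` under arrangement `π`:
the sum, over the seat-graph neighbors `v` of `π p`, of `p`'s preference for the agent seated
at `v`. -/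
def utility [Fintype V] (G : SimpleGraph V) (f : P → P → ℝ) (π : P ≃ V) (p : P) : ℝ :=
  ∑ v : V, if G.Adj (π p) v then f p (π.symm v) else 0

/-- The social welfare of an arrangement: the sum of the utilities of all agents. -/
def sw [Fintype P] [Fintype V] (G : SimpleGraph V) (f : P → P → ℝ) (π : P ≃ V) : ℝ :=
  ∑ p : P, utility G f π p

/-- The `(p,q)`-swap arrangement of `π`. -/
def swapArr (π : P ≃ V) (p q : P) : P ≃ V := (Equiv.swap p q).trans π

/-- `{p, q}` is a blocking pair for `π`: both agents strictly improve by swapping seats. -/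
def blocking [Fintype V] (G : SimpleGraph V) (f : P → P → ℝ) (π : P ≃ V) (p q : P) : Prop :=
  p ≠ q ∧ utility G f π p < utility G f (swapArr π p q) p
        ∧ utility G f π q < utility G f (swapArr π p q) q

/-- An arrangement is stable if it has no blocking pair. -/
def stable [Fintype V] (G : SimpleGraph V) (f : P → P → ℝ) (π : P ≃ V) : Prop :=
  ∀ p q : P, ¬ blocking G f π p q

/-- An arrangement is envy-free if no agent would strictly improve by taking
another agent's seat (via a swap). -/
def envyFree [Fintype V] (G : SimpleGraph V) (f : P → P → ℝ) (π : P ≃ V) : Prop :=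
  ∀ p q : P, p ≠ q → utility G f (swapArr π p q) p ≤ utility G f π p

/-- The least utility of an agent under `π` (for a finite nonempty set of agents, the
infimum of the range of utilities is the minimum utility). -/
def minUtil [Fintype V] (G : SimpleGraph V) (f : P → P → ℝ) (π : P ≃ V) : ℝ :=
  sInf (Set.range (utility G f π))

/-- A maximin arrangement maximizes the least utility of an agent. -/
def maximin [Fintype V] (G : SimpleGraph V) (f : P → P → ℝ) (πf : P ≃ V) : Prop :=
  ∀ π : P ≃ V, minUtil G f π ≤ minUtil G f πf

/-- A maximum arrangement maximizes the social welfare. -/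
def maximum [Fintype P] [Fintype V] (G : SimpleGraph V) (f : P → P → ℝ) (πm : P ≃ V) : Prop :=
  ∀ π : P ≃ V, sw G f π ≤ sw G f πm

end SeatArrangement

open SeatArrangement

/-! The welfare is a sum over the `2|E(G)|` ordered pairs of adjacent seats, each contributing
at most `1`; so it equals `2|E(G)|` exactly when all neighbours are adjacent in `H`, i.e. when the
inverse of the arrangement is a bijective homomorphism `G →g H`. -/

namespace SeatArrangement

variable {P V : Type*} [Fintype P] [Fintype V]

theorem sw_eq_sum_adj (G : SimpleGraph V) (f : P → P → ℝ) (π : P ≃ V) :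
    sw G f π = ∑ u : V, ∑ v : V, if G.Adj u v then f (π.symm u) (π.symm v) else 0 := by
  unfold sw utility
  rw [← Equiv.sum_comp π.symm]
  simp only [Equiv.apply_symm_apply]

theorem sum_sum_adj_eq_two_mul_ncard_edgeSet (G : SimpleGraph V) :
    (∑ u : V, ∑ v : V, if G.Adj u v then (1 : ℝ) else 0) = 2 * (G.edgeSet.ncard : ℝ) := by
  have hdeg (u : V) : (∑ v : V, if G.Adj u v then (1 : ℝ) else 0) = G.degree u := by
    rw [Finset.sum_boole, SimpleGraph.degree, SimpleGraph.neighborFinset_eq_filter]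
  rw [Finset.sum_congr rfl fun u _ => hdeg u, ← SimpleGraph.coe_edgeFinset, Set.ncard_coe_finset]
  exact_mod_cast SimpleGraph.sum_degrees_eq_twice_card_edges G

theorem sw_eq_two_mul_ncard_edgeSet_iff (G : SimpleGraph V) {f : P → P → ℝ}
    (hf : ∀ p q, f p q ≤ 1) (π : P ≃ V) :
    sw G f π = 2 * (G.edgeSet.ncard : ℝ) ↔
      ∀ u v, G.Adj u v → f (π.symm u) (π.symm v) = 1 := by
  have hdiff : sw G f π - 2 * (G.edgeSet.ncard : ℝ) =
      ∑ u : V, ∑ v : V, if G.Adj u v then f (π.symm u) (π.symm v) - 1 else 0 := by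
    rw [sw_eq_sum_adj, ← sum_sum_adj_eq_two_mul_ncard_edgeSet, ← Finset.sum_sub_distrib]
    refine Finset.sum_congr rfl fun u _ => ?_
    rw [← Finset.sum_sub_distrib]
    refine Finset.sum_congr rfl fun v _ => ?_
    split_ifs <;> ring
  have hterm (u v : V) : (if G.Adj u v then f (π.symm u) (π.symm v) - 1 else 0) ≤ 0 := by
    split_ifs
    · linarith [hf (π.symm u) (π.symm v)]
    · exact le_rfl
  rw [← sub_eq_zero, hdiff, Finset.sum_eq_zero_iff_of_nonpos fun u _ =>
    Finset.sum_nonpos fun v _ => hterm u v]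
  simp only [Finset.mem_univ, true_imp_iff]
  refine forall_congr' fun u => ?_
  rw [Finset.sum_eq_zero_iff_of_nonpos fun v _ => hterm u v]
  simp only [Finset.mem_univ, true_imp_iff, ite_eq_right_iff, sub_eq_zero]

end SeatArrangement

theorem spanning_subgraph_iff_max_welfare {VG VH : Type*} [Fintype VG] [Fintype VH]
    (G : SimpleGraph VG) (H : SimpleGraph VH) :
    (∃ g : VG → VH, Function.Bijective g ∧
      ∀ u v : VG, G.Adj u v → H.Adj (g u) (g v)) ↔
    (∃ π : VH ≃ VG,
      sw G (fun p q => if H.Adj p q then 1 else 0) π = 2 * (G.edgeSet.ncard : ℝ)) := by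
  have hf : ∀ p q : VH, (if H.Adj p q then (1 : ℝ) else 0) ≤ 1 := fun p q => by
    split_ifs <;> norm_num
  simp only [sw_eq_two_mul_ncard_edgeSet_iff G hf, ite_eq_left_iff, zero_ne_one, imp_false,
    not_not]
  constructor
  · rintro ⟨g, hg, hadj⟩
    exact ⟨(Equiv.ofBijective g hg).symm, by simpa using hadj⟩
  · rintro ⟨π, hadj⟩
    exact ⟨π.symm, π.symm.bijective, hadj⟩
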